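/- arXiv:math/9903079 — 2 statements merged into one kernel-verified Lean document; each statement's English description precedes it below -/
import Mathlib

section
/- Let r ∈ Mat_n(ℂ) ⊗ Mat_n(ℂ) satisfy the classical Yang–Baxter equation [r₁₂,r₁₃] + [r₁₂,r₂₃] + [r₁₃,r₂₃] = 0 (in Mat_n(ℂ)^{⊗3}) and r + r₂₁ = P. Set R = 1 + 2ℏr + 2ℏ²r², a matrix over the polynomial ring ℂ[ℏ]. Then every entry of the matrix R₁₂R₁₃R₂₃ − R₂₃R₁₃R₁₂ is divisible by ℏ³, and every entry of (PR − (1 + ℏ + ℏ²/2))·(PR + (1 − ℏ + ℏ²/2)) is divisible by ℏ³. (That is, R satisfies the quantum Yang–Baxter equation and the Hecke relation (PR − q)(PR + q⁻¹) = 0 with q = e^ℏ, modulo ℏ³.) -/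
/-!
Divisibility of all entries by `ℏ³` is the vanishing of the matrix over `ℂ[ℏ]/(ℏ³)`, so we
compute in an algebra over a ring in which `t³ = 0`.

Writing `R = 1 + t x` with `x = 2r + 2t r²`, the defect `R₁₂R₁₃R₂₃ - R₂₃R₁₃R₁₂` is `t²`
times the sum of the commutators of the `x`'s, and modulo `t³` these are `4` times the classical
Yang–Baxter expression.

For the Hecke relation, `r + r₂₁ = P` says `P r P = P - r`, whose square is `r²` because
`P² = 1`. Hence `(PR)² = (PRP) R = R₂₁ R ≡ 1 + 2t PR`, and since `q - q⁻¹ ≡ 2t`,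
`q q⁻¹ ≡ 1` for `q = 1 + t + t²/2`, `q⁻¹ ≡ 1 - t + t²/2`, the product `(PR - q)(PR + q⁻¹)`
vanishes.
-/

namespace GGS0

open Finset Polynomial

noncomputable section

variable {α : Type*} [CommRing α]

/-- Matrix unit `E_{ij}` (ℕ-indices; `0` if out of range). -/
def E (n i j : ℕ) : Matrix (Fin n) (Fin n) α :=
  fun a b => if (a : ℕ) = i ∧ (b : ℕ) = j then 1 else 0

/-- Tensor (Kronecker) product of two `n × n` matrices. -/
def tens {n : ℕ} (A B : Matrix (Fin n) (Fin n) α) :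
    Matrix (Fin n × Fin n) (Fin n × Fin n) α :=
  fun p q => A p.1 q.1 * B p.2 q.2

/-- `M₂₁` : swap of the two tensor factors. -/
def swap21 {n : ℕ} (M : Matrix (Fin n × Fin n) (Fin n × Fin n) α) :
    Matrix (Fin n × Fin n) (Fin n × Fin n) α :=
  fun p q => M (p.2, p.1) (q.2, q.1)

/-- The permutation (Casimir) element `P = Σ E_{ij} ⊗ E_{ji}`. -/
def Pm (n : ℕ) : Matrix (Fin n × Fin n) (Fin n × Fin n) α :=
  ∑ i ∈ range n, ∑ j ∈ range n, tens (E n i j) (E n j i)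

/-- `M₁₂ = M ⊗ 1` in the triple tensor product. -/
def lift12 {n : ℕ} (M : Matrix (Fin n × Fin n) (Fin n × Fin n) α) :
    Matrix (Fin n × Fin n × Fin n) (Fin n × Fin n × Fin n) α :=
  fun p q => M (p.1, p.2.1) (q.1, q.2.1) * (if p.2.2 = q.2.2 then 1 else 0)

/-- `M₁₃`. -/
def lift13 {n : ℕ} (M : Matrix (Fin n × Fin n) (Fin n × Fin n) α) :
    Matrix (Fin n × Fin n × Fin n) (Fin n × Fin n × Fin n) α :=
  fun p q => M (p.1, p.2.2) (q.1, q.2.2) * (if p.2.1 = q.2.1 then 1 else 0)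

/-- `M₂₃ = 1 ⊗ M`. -/
def lift23 {n : ℕ} (M : Matrix (Fin n × Fin n) (Fin n × Fin n) α) :
    Matrix (Fin n × Fin n × Fin n) (Fin n × Fin n × Fin n) α :=
  fun p q => M (p.2.1, p.2.2) (q.2.1, q.2.2) * (if p.1 = q.1 then 1 else 0)

open Matrix

section TruncatedExponential

variable {K A : Type*} [CommRing K] [Ring A] [Algebra K A]

/-- `1 + 2ta + 2t²a²`, the expansion of `exp (2ta)` to second order in `t`. -/
def truncExp (t : K) (a : A) : A := 1 + (2 * t) • a + (2 * t ^ 2) • (a * a)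

lemma map_truncExp {B F : Type*} [Ring B] [Algebra K B] [FunLike F A B] [AlgHomClass F K A B]
    (f : F) (t : K) (a : A) : f (truncExp t a) = truncExp t (f a) := by
  simp [truncExp]

lemma truncExp_eq_one_add_smul (t : K) (a : A) :
    truncExp t a = 1 + t • (2 • a + t • (2 • (a * a))) := by
  simp only [truncExp]; module

variable {t : K}

lemma one_add_smul_mul_mul_sub_rev (ht : t ^ 3 = 0) (x y z : A) :
    (1 + t • x) * (1 + t • y) * (1 + t • z) - (1 + t • z) * (1 + t • y) * (1 + t • x)
      = t ^ 2 • ((x * y - y * x) + (x * z - z * x) + (y * z - z * y)) := by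
  simp only [add_mul, mul_add, one_mul, mul_one, smul_mul_assoc, mul_smul_comm, mul_assoc]
  linear_combination (norm := module) ht • (x * (y * z) - z * (y * x))

lemma sq_smul_commutator_add_smul (ht : t ^ 3 = 0) (u v u' v' : A) :
    t ^ 2 • ((u + t • v) * (u' + t • v') - (u' + t • v') * (u + t • v))
      = t ^ 2 • (u * u' - u' * u) := by
  simp only [add_mul, mul_add, smul_mul_assoc, mul_smul_comm]
  linear_combination (norm := module)
    ht • (u * v' - v' * u + v * u' - u' * v + t • (v * v' - v' * v))

theorem truncExp_ybe (ht : t ^ 3 = 0) (a b c : A) :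
    truncExp t a * truncExp t b * truncExp t c - truncExp t c * truncExp t b * truncExp t a
      = (4 * t ^ 2) • ((a * b - b * a) + (a * c - c * a) + (b * c - c * b)) := by
  rw [truncExp_eq_one_add_smul, truncExp_eq_one_add_smul, truncExp_eq_one_add_smul,
    one_add_smul_mul_mul_sub_rev ht, smul_add, smul_add, sq_smul_commutator_add_smul ht,
    sq_smul_commutator_add_smul ht, sq_smul_commutator_add_smul ht]
  simp only [smul_mul_assoc, mul_smul_comm]
  module

lemma mul_truncExp_mul_of_mul_self_eq_one {P : A} (hP : P * P = 1) (t : K) (a : A) :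
    P * truncExp t a * P = truncExp t (P * a * P) := by
  have hPP (x : A) : P * (P * x) = x := by rw [← mul_assoc, hP, one_mul]
  simp only [truncExp, mul_add, add_mul, mul_smul_comm, smul_mul_assoc, mul_one, hP, mul_assoc,
    hPP]

lemma sub_mul_sub_self_eq {P a : A} (hP : P * P = 1) (ha : P * a * P = P - a) :
    (P - a) * (P - a) = a * a := by
  have haP : a * P = 1 - P * a := by
    have := congrArg (P * ·) ha
    simp only [← mul_assoc, hP, one_mul, mul_sub] at this
    exact this
  simp only [sub_mul, mul_sub, hP, haP]
  abel

lemma truncExp_mul_truncExp_of_mul_self_eq (ht : t ^ 3 = 0) {a b : A} (hab : b * b = a * a) :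
    truncExp t b * truncExp t a = 1 + (2 * t) • ((b + a) * truncExp t a) := by
  simp only [truncExp, add_mul, mul_add, one_mul, mul_one, smul_mul_assoc, mul_smul_comm,
    mul_assoc, hab]
  linear_combination (norm := module) ht • ((4 * t) • (a * (a * (a * a))))

lemma sub_smul_one_mul_add_smul_one (ht : t ^ 3 = 0) {s : K} (hs : 2 * s = 1) (y : A) :
    (y - (1 + t + s * t ^ 2) • 1) * (y + (1 - t + s * t ^ 2) • 1)
      = y * y - (2 * t) • y - 1 := by
  have hq : (1 + t + s * t ^ 2) * (1 - t + s * t ^ 2) = 1 := by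
    linear_combination t ^ 2 * hs + s ^ 2 * t * ht
  simp only [sub_mul, mul_add, smul_mul_assoc, mul_smul_comm, one_mul, mul_one]
  linear_combination (norm := module) hq • (-1 : A)

theorem truncExp_hecke (ht : t ^ 3 = 0) {s : K} (hs : 2 * s = 1) {P a : A} (hP : P * P = 1)
    (ha : P * a * P = P - a) :
    (P * truncExp t a - (1 + t + s * t ^ 2) • 1) * (P * truncExp t a + (1 - t + s * t ^ 2) • 1)
      = 0 := by
  have hsq : P * truncExp t a * (P * truncExp t a) = 1 + (2 * t) • (P * truncExp t a) := by
    calc P * truncExp t a * (P * truncExp t a) = P * truncExp t a * P * truncExp t a := by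
          simp only [mul_assoc]
      _ = truncExp t (P - a) * truncExp t a := by
          rw [mul_truncExp_mul_of_mul_self_eq_one hP, ha]
      _ = 1 + (2 * t) • (P * truncExp t a) := by
          rw [truncExp_mul_truncExp_of_mul_self_eq ht (sub_mul_sub_self_eq hP ha), sub_add_cancel]
  rw [sub_smul_one_mul_add_smul_one ht hs, hsq]
  abel

end TruncatedExponential

section Permutation

variable {n : ℕ}

lemma Pm_apply (p q : Fin n × Fin n) :
    (Pm n : Matrix _ _ α) p q = if p.swap = q then 1 else 0 := by
  simp only [Pm, Matrix.sum_apply, tens, E]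
  rw [Finset.sum_eq_single (p.1 : ℕ), Finset.sum_eq_single (p.2 : ℕ)]
  · simp [Prod.ext_iff, Fin.ext_iff, eq_comm, ite_and, and_comm]
  · intro j _ hj; simp [Ne.symm hj]
  · simp
  · intro i _ hi; simp [Ne.symm hi]
  · simp

lemma Pm_mul (M : Matrix (Fin n × Fin n) (Fin n × Fin n) α) :
    Pm n * M = M.submatrix Prod.swap id := by
  ext p q
  simp [mul_apply, Pm_apply, ite_mul]

lemma mul_Pm (M : Matrix (Fin n × Fin n) (Fin n × Fin n) α) :
    M * Pm n = M.submatrix id Prod.swap := by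
  ext p q
  simp [mul_apply, Pm_apply, Prod.swap_eq_iff_eq_swap]

lemma Pm_mul_Pm : (Pm n : Matrix _ _ α) * Pm n = 1 := by
  rw [Pm_mul]; ext p q; simp [Pm_apply, one_apply]

lemma Pm_mul_mul_Pm (M : Matrix (Fin n × Fin n) (Fin n × Fin n) α) :
    Pm n * M * Pm n = swap21 M := by
  rw [Pm_mul, mul_Pm]; rfl

lemma Pm_map {β : Type*} [CommRing β] (g : α →+* β) :
    (Pm n : Matrix _ _ α).map g = Pm n := by
  ext; simp [Pm_apply, apply_ite g]

end Permutation

section Lifts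

def lift12AlgHom (n : ℕ) : Matrix (Fin n × Fin n) (Fin n × Fin n) α →ₐ[α]
    Matrix (Fin n × Fin n × Fin n) (Fin n × Fin n × Fin n) α :=
  AlgHom.ofLinearMap
    { toFun := lift12
      map_add' := fun M N => by ext; simp only [lift12, Matrix.add_apply, add_mul]
      map_smul' := fun c M => by ext; simp [lift12] }
    (show lift12 1 = 1 by
      ext p q; simp only [lift12, one_apply, Prod.ext_iff]; split_ifs <;> simp_all)
    (fun M N => by ext; simp [lift12, mul_apply, Fintype.sum_prod_type, mul_ite, ite_mul])

def lift13AlgHom (n : ℕ) : Matrix (Fin n × Fin n) (Fin n × Fin n) α →ₐ[α]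
    Matrix (Fin n × Fin n × Fin n) (Fin n × Fin n × Fin n) α :=
  AlgHom.ofLinearMap
    { toFun := lift13
      map_add' := fun M N => by ext; simp only [lift13, Matrix.add_apply, add_mul]
      map_smul' := fun c M => by ext; simp [lift13] }
    (show lift13 1 = 1 by
      ext p q; simp only [lift13, one_apply, Prod.ext_iff]; split_ifs <;> simp_all)
    (fun M N => by ext; simp [lift13, mul_apply, Fintype.sum_prod_type, mul_ite, ite_mul])

def lift23AlgHom (n : ℕ) : Matrix (Fin n × Fin n) (Fin n × Fin n) α →ₐ[α]
    Matrix (Fin n × Fin n × Fin n) (Fin n × Fin n × Fin n) α :=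
  AlgHom.ofLinearMap
    { toFun := lift23
      map_add' := fun M N => by ext; simp only [lift23, Matrix.add_apply, add_mul]
      map_smul' := fun c M => by ext; simp [lift23] }
    (show lift23 1 = 1 by
      ext p q; simp only [lift23, one_apply, Prod.ext_iff]; split_ifs <;> simp_all)
    (fun M N => by ext; simp [lift23, mul_apply, Fintype.sum_prod_type, mul_ite, ite_mul])

variable {n : ℕ}

lemma lift12_truncExp (t : α) (M : Matrix (Fin n × Fin n) (Fin n × Fin n) α) :
    lift12 (truncExp t M) = truncExp t (lift12 M) :=
  map_truncExp (lift12AlgHom n) t M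

lemma lift13_truncExp (t : α) (M : Matrix (Fin n × Fin n) (Fin n × Fin n) α) :
    lift13 (truncExp t M) = truncExp t (lift13 M) :=
  map_truncExp (lift13AlgHom n) t M

lemma lift23_truncExp (t : α) (M : Matrix (Fin n × Fin n) (Fin n × Fin n) α) :
    lift23 (truncExp t M) = truncExp t (lift23 M) :=
  map_truncExp (lift23AlgHom n) t M

variable {β : Type*} [CommRing β] (g : α →+* β)
  (M : Matrix (Fin n × Fin n) (Fin n × Fin n) α)

lemma lift12_map : lift12 (M.map g) = (lift12 M).map g := by
  ext; simp [lift12, apply_ite g]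

lemma lift13_map : lift13 (M.map g) = (lift13 M).map g := by
  ext; simp [lift13, apply_ite g]

lemma lift23_map : lift23 (M.map g) = (lift23 M).map g := by
  ext; simp [lift23, apply_ite g]

end Lifts

lemma truncExp_map {ι β : Type*} [Fintype ι] [DecidableEq ι] [CommRing β] (f : α →+* β)
    (t : α) (M : Matrix ι ι α) : (truncExp t M).map f = truncExp (f t) (M.map f) := by
  rw [truncExp, truncExp, ← RingHom.mapMatrix_apply]
  simp only [map_add, map_one, RingHom.mapMatrix_apply, Matrix.map_smul' _ _ _ (map_mul f),
    Matrix.map_mul, map_mul, map_pow, map_ofNat]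

lemma forall_dvd_apply_iff_map_mk_eq_zero {ι κ : Type*} (c : α) (M : Matrix ι κ α) :
    (∀ p q, c ∣ M p q) ↔ M.map (Ideal.Quotient.mk (Ideal.span {c})) = 0 := by
  simp [← Matrix.ext_iff, Ideal.Quotient.eq_zero_iff_mem, Ideal.mem_span_singleton]

theorem stmt_0_general {n : ℕ}
    (r : Matrix (Fin n × Fin n) (Fin n × Fin n) ℂ)
    (hcybe : (lift12 r * lift13 r - lift13 r * lift12 r)
        + (lift12 r * lift23 r - lift23 r * lift12 r)
        + (lift13 r * lift23 r - lift23 r * lift13 r) = 0)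
    (hP : r + swap21 r = Pm n)
    (R : Matrix (Fin n × Fin n) (Fin n × Fin n) (Polynomial ℂ))
    (hR : R = 1 + (C (2 : ℂ) * X) • r.map C + (C (2 : ℂ) * X ^ 2) • (r.map C * r.map C)) :
    (∀ p q, (X ^ 3 : Polynomial ℂ) ∣
      (lift12 R * lift13 R * lift23 R - lift23 R * lift13 R * lift12 R) p q) ∧
    (∀ p q, (X ^ 3 : Polynomial ℂ) ∣
      (((Pm n * R - ((1 : Polynomial ℂ) + X + C (1 / 2 : ℂ) * X ^ 2) • (1 : Matrix (Fin n × Fin n) (Fin n × Fin n) (Polynomial ℂ)))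
        * (Pm n * R + ((1 : Polynomial ℂ) - X + C (1 / 2 : ℂ) * X ^ 2) • (1 : Matrix (Fin n × Fin n) (Fin n × Fin n) (Polynomial ℂ)))
        : Matrix (Fin n × Fin n) (Fin n × Fin n) (Polynomial ℂ)) p q)) := by
  have hR' : R = truncExp (X : ℂ[X]) (r.map C) := by rw [hR, truncExp, map_ofNat C 2]
  simp only [forall_dvd_apply_iff_map_mk_eq_zero, ← RingHom.mapMatrix_apply, map_sub, map_add,
    map_mul]
  set π := Ideal.Quotient.mk (Ideal.span {(X ^ 3 : ℂ[X])})
  set g := π.comp C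
  have hε : π X ^ 3 = 0 := by
    rw [← map_pow, Ideal.Quotient.eq_zero_iff_mem]
    exact Ideal.mem_span_singleton_self _
  have hs : 2 * g (1 / 2) = 1 := by
    rw [← map_ofNat g 2, ← map_mul]
    norm_num
  have hRπ : R.map π = truncExp (π X) (r.map g) := by
    rw [hR', truncExp_map, Matrix.map_map]
    rfl
  have hcybe' := congrArg g.mapMatrix hcybe
  simp only [map_add, map_sub, map_mul, map_zero, RingHom.mapMatrix_apply, ← lift12_map,
    ← lift13_map, ← lift23_map] at hcybe'
  have hPr : Pm n * r * Pm n = Pm n - r := by rw [Pm_mul_mul_Pm, ← hP, add_sub_cancel_left]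
  have hPa : Pm n * r.map g * Pm n = Pm n - r.map g := by
    simpa only [map_mul, map_sub, RingHom.mapMatrix_apply, Pm_map] using congrArg g.mapMatrix hPr
  simp only [RingHom.mapMatrix_apply, hRπ, ← lift12_map, ← lift13_map, ← lift23_map, Pm_map,
    Matrix.map_smul' _ _ _ (map_mul π), Matrix.map_one _ (map_zero π) (map_one π)]
  constructor
  · rw [lift12_truncExp, lift13_truncExp, lift23_truncExp, truncExp_ybe hε, hcybe', smul_zero]
  · simp only [map_add, map_sub, map_one, map_mul, map_pow]
    exact truncExp_hecke hε hs Pm_mul_Pm hPa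

/-- if `r` satisfies the CYBE and `r + r₂₁ = P`, then
`R = 1 + 2ℏr + 2ℏ²r²` (over `ℂ[ℏ]`) satisfies the QYBE and the Hecke relation
`(PR − q)(PR + q⁻¹) = 0`, `q = e^ℏ`, modulo `ℏ³` (entrywise divisibility by `ℏ³`). -/
theorem stmt_0 {n : ℕ} (hn : 2 ≤ n)
    (r : Matrix (Fin n × Fin n) (Fin n × Fin n) ℂ)
    (hcybe : (lift12 r * lift13 r - lift13 r * lift12 r)
        + (lift12 r * lift23 r - lift23 r * lift12 r)
        + (lift13 r * lift23 r - lift23 r * lift13 r) = 0)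
    (hP : r + swap21 r = Pm n)
    (R : Matrix (Fin n × Fin n) (Fin n × Fin n) (Polynomial ℂ))
    (hR : R = 1 + (C (2 : ℂ) * X) • r.map C + (C (2 : ℂ) * X ^ 2) • (r.map C * r.map C)) :
    (∀ p q, (X ^ 3 : Polynomial ℂ) ∣
      (lift12 R * lift13 R * lift23 R - lift23 R * lift13 R * lift12 R) p q) ∧
    (∀ p q, (X ^ 3 : Polynomial ℂ) ∣
      (((Pm n * R - ((1 : Polynomial ℂ) + X + C (1 / 2 : ℂ) * X ^ 2) • (1 : Matrix (Fin n × Fin n) (Fin n × Fin n) (Polynomial ℂ)))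
        * (Pm n * R + ((1 : Polynomial ℂ) - X + C (1 / 2 : ℂ) * X ^ 2) • (1 : Matrix (Fin n × Fin n) (Fin n × Fin n) (Polynomial ℂ)))
        : Matrix (Fin n × Fin n) (Fin n × Fin n) (Polynomial ℂ)) p q)) :=
  stmt_0_general r hcybe hP R hR

end
end GGS0
end

section
/- Σ_i (a₊ⁱ)² = − Σ_{α ≺← β} sign(α,β)(|α| − 1) e_β ⊗ e_{−α}, the sum on the right being over all pairs of positive roots with α ≺ β and τ reversing orientation (where β = τᵏα for the relevant k). -/
namespace GGS

open Finset
open scoped Classical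

noncomputable section

/-- `n × n` complex matrices, `Mat_n(ℂ)`. -/
abbrev MatN (n : ℕ) := Matrix (Fin n) (Fin n) ℂ
/-- `Mat_n(ℂ) ⊗ Mat_n(ℂ)`, realized as matrices indexed by pairs. -/
abbrev MatT (n : ℕ) := Matrix (Fin n × Fin n) (Fin n × Fin n) ℂ
/-- `Mat_n(ℂ)^{⊗3}`. -/
abbrev MatT3 (n : ℕ) := Matrix (Fin n × Fin n × Fin n) (Fin n × Fin n × Fin n) ℂ

/-- Matrix unit `E_{ij}` (ℕ-indices; `0` if out of range). -/
def E (n i j : ℕ) : MatN n := fun a b => if (a : ℕ) = i ∧ (b : ℕ) = j then 1 else 0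

/-- Tensor (Kronecker) product of two `n × n` matrices. -/
def tens {n : ℕ} (A B : MatN n) : MatT n := fun p q => A p.1 q.1 * B p.2 q.2

/-- `M₂₁` : swap of the two tensor factors. -/
def swap21 {n : ℕ} (M : MatT n) : MatT n := fun p q => M (p.2, p.1) (q.2, q.1)

/-- The permutation (Casimir) element `P = Σ E_{ij} ⊗ E_{ji}`. -/
def Pm (n : ℕ) : MatT n := ∑ i ∈ range n, ∑ j ∈ range n, tens (E n i j) (E n j i)

/-- `P⁰ = Σ E_{ii} ⊗ E_{ii}`. -/
def P0 (n : ℕ) : MatT n := ∑ i ∈ range n, tens (E n i i) (E n i i)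

/-- `M₁₂ = M ⊗ 1`. -/
def lift12 {n : ℕ} (M : MatT n) : MatT3 n :=
  fun p q => M (p.1, p.2.1) (q.1, q.2.1) * (if p.2.2 = q.2.2 then 1 else 0)

/-- `M₁₃`. -/
def lift13 {n : ℕ} (M : MatT n) : MatT3 n :=
  fun p q => M (p.1, p.2.2) (q.1, q.2.2) * (if p.2.1 = q.2.1 then 1 else 0)

/-- `M₂₃ = 1 ⊗ M`. -/
def lift23 {n : ℕ} (M : MatT n) : MatT3 n :=
  fun p q => M (p.2.1, p.2.2) (q.2.1, q.2.2) * (if p.1 = q.1 then 1 else 0)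

/-- The quantum Yang–Baxter equation `R₁₂R₁₃R₂₃ = R₂₃R₁₃R₁₂`. -/
def QYBE {n : ℕ} (M : MatT n) : Prop :=
  lift12 M * lift13 M * lift23 M = lift23 M * lift13 M * lift12 M

/-- The Hecke relation `(PR − q)(PR + q⁻¹) = 0`. -/
def Hecke {n : ℕ} (q : ℝ) (M : MatT n) : Prop :=
  (Pm n * M - (q : ℂ) • (1 : MatT n)) * (Pm n * M + (q : ℂ)⁻¹ • (1 : MatT n)) = 0

/-- Standard basis vector `e_i` of `ℂⁿ` (as a function on indices). -/
def evec (i : ℕ) : ℕ → ℂ := fun k => if k = i then 1 else 0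
/-- The root vector `e_i − e_j`. -/
def rvec (i j : ℕ) : ℕ → ℂ := evec i - evec j
/-- The simple root `α_i = e_i − e_{i+1}` (0-based indexing). -/
def svec (i : ℕ) : ℕ → ℂ := rvec i (i + 1)
/-- The inner product on `ℂⁿ` for which `(e_i)` is orthonormal (restricted to real vectors). -/
def ipn (n : ℕ) (x y : ℕ → ℂ) : ℂ := ∑ k ∈ range n, x k * y k

/-- A Belavin–Drinfeld triple of type `A_{n−1}`; simple roots are indexed `0,…,n−2`
(0-based: index `i` stands for `α_i = e_i − e_{i+1}`). -/
structure BDTriple (n : ℕ) where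
  Γ1 : Finset ℕ
  Γ2 : Finset ℕ
  τ : ℕ → ℕ
  mem1 : ∀ i ∈ Γ1, i + 1 < n
  mem2 : ∀ i ∈ Γ2, i + 1 < n
  bij : Set.BijOn τ ↑Γ1 ↑Γ2
  isometry : ∀ i ∈ Γ1, ∀ j ∈ Γ1, ipn n (svec (τ i)) (svec (τ j)) = ipn n (svec i) (svec j)
  nilp : ∀ i ∈ Γ1, ∃ k ≥ 1, τ^[k] i ∉ Γ1

variable {n : ℕ}

/-- The positive root `e_i − e_j` (`i < j`) lies in `Γ̃₁` (the positive part of `Span Γ₁`). -/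
def SpanRoot (T : BDTriple n) (i j : ℕ) : Prop :=
  i < j ∧ ∀ k, i ≤ k → k < j → k ∈ T.Γ1

/-- `q = τ(p)` for positive roots, via the additive extension of `τ` to `Γ̃₁`. -/
def tauStep (T : BDTriple n) (p q : ℕ × ℕ) : Prop :=
  SpanRoot T p.1 p.2 ∧ q.1 < q.2 ∧ rvec q.1 q.2 = ∑ k ∈ Finset.Ico p.1 p.2, svec (T.τ k)

/-- `q = τᵏ(p)`. -/
def precK (T : BDTriple n) : ℕ → ℕ × ℕ → ℕ × ℕ → Prop
  | 0, p, q => p = q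
  | k + 1, p, q => ∃ r, tauStep T p r ∧ precK T k r q

/-- `p ≺ q`, i.e. `q = τᵏ p` for some `k ≥ 1`. -/
def prec (T : BDTriple n) (p q : ℕ × ℕ) : Prop := ∃ k, precK T (k + 1) p q

/-- `p ≺← q` : `q = τᵏ p` and `τᵏ` reverses orientation on `p`. -/
def RevOri (T : BDTriple n) (p q : ℕ × ℕ) : Prop :=
  ∃ k, precK T (k + 1) p q ∧ T.τ^[k + 1] p.1 = q.2 - 1

/-- `p ≺→ q` : `q = τᵏ p` and `τᵏ` preserves orientation on `p`. -/
def PresOri (T : BDTriple n) (p q : ℕ × ℕ) : Prop :=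
  ∃ k, precK T (k + 1) p q ∧ T.τ^[k + 1] p.1 = q.1

/-- `sign(α,β)` : `(−1)^{1−|α|}` in the orientation-reversing case, `1` otherwise. -/
def sgn (T : BDTriple n) (p q : ℕ × ℕ) : ℂ :=
  if RevOri T p q then (-1 : ℂ) ^ (p.2 - p.1 - 1) else 1

/-- Sum over all pairs of (would-be) positive roots with indices `< n`. -/
def sumRoots (n : ℕ) (f : ℕ × ℕ → ℕ × ℕ → MatT n) : MatT n :=
  ∑ i ∈ range n, ∑ j ∈ range n, ∑ k ∈ range n, ∑ l ∈ range n, f (i, j) (k, l)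

/-- `a = Σ_{α≺β} sign(α,β) (e_{−α} ⊗ e_β − e_β ⊗ e_{−α})`. -/
def aMat (T : BDTriple n) : MatT n :=
  sumRoots n fun p q =>
    if prec T p q then
      sgn T p q • (tens (E n p.2 p.1) (E n q.1 q.2) - tens (E n q.1 q.2) (E n p.2 p.1))
    else 0

/-- `r_s = ½ P⁰ + Σ_{α>0} e_{−α} ⊗ e_α`. -/
def rsMat (n : ℕ) : MatT n :=
  (1 / 2 : ℂ) • P0 n +
    ∑ i ∈ range n, ∑ j ∈ range n, if i < j then tens (E n j i) (E n i j) else 0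

/-- `ε = a r_s + r_s a + a²`. -/
def epsMat (T : BDTriple n) : MatT n :=
  aMat T * rsMat n + rsMat n * aMat T + aMat T * aMat T

/-- Entry of a tensor-square matrix, with ℕ indices. -/
def entry (M : MatT n) (a b c d : ℕ) : ℂ :=
  if h : a < n ∧ b < n ∧ c < n ∧ d < n then
    M (⟨a, h.1⟩, ⟨b, h.2.1⟩) (⟨c, h.2.2.1⟩, ⟨d, h.2.2.2⟩)
  else 0

/-- The coefficient of `e_β ⊗ e_{−α}` in `M` (here `p = α`, `q = β`). -/
def coeffBA (M : MatT n) (p q : ℕ × ℕ) : ℂ := entry M q.1 p.2 q.2 p.1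

/-- `q^z = exp(z · ln q)`. -/
def qpow (q : ℝ) (z : ℂ) : ℂ := Complex.exp (z * (Real.log q : ℂ))

/-- The coefficients `K_{α,β}`. -/
def Kc (T : BDTriple n) (p q : ℕ × ℕ) : ℂ :=
  (if p.2 = q.1 then (1 / 2 : ℂ) else 0) - (if q.2 = p.1 then (1 / 2 : ℂ) else 0)
    + (if ∃ g : ℕ × ℕ, prec T p g ∧ prec T g q ∧ p.2 = g.1 then 1 else 0)
    - (if ∃ g : ℕ × ℕ, prec T p g ∧ prec T g q ∧ g.2 = p.1 then 1 else 0)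
    + (if RevOri T p q then 1 - ((p.2 - p.1 : ℕ) : ℂ) else 0)

/-- `Jⁱ = 1 + (q − q⁻¹) Σ_{β = τⁱα} sign(α,β) q^{K_{α,β}} e_β ⊗ e_{−α}`. -/
def Jlevel (q : ℝ) (T : BDTriple n) (i : ℕ) : MatT n :=
  1 + sumRoots n fun p r =>
    if precK T i p r then
      (((q : ℂ) - (q : ℂ)⁻¹) * sgn T p r * qpow q (Kc T p r)) • tens (E n r.1 r.2) (E n p.2 p.1)
    else 0

/-- `J = J¹ J² ⋯` (levels beyond the maximal power of `τ` contribute the identity). -/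
def Jmat (q : ℝ) (T : BDTriple n) : MatT n :=
  ((List.range n).map fun i => Jlevel q T (i + 1)).prod

/-- The standard Drinfeld–Jimbo `R`-matrix `R_s`. -/
def RsQ (n : ℕ) (q : ℝ) : MatT n :=
  (q : ℂ) • P0 n
    + (∑ i ∈ range n, ∑ j ∈ range n, if i ≠ j then tens (E n i i) (E n j j) else 0)
    + ((q : ℂ) - (q : ℂ)⁻¹) •
        (∑ i ∈ range n, ∑ j ∈ range n, if j < i then tens (E n i j) (E n j i) else 0)

/-- `e_{−α} ∧_c e_β = q^{−c} e_{−α} ⊗ e_β − q^c e_β ⊗ e_{−α}` (`p = α`, `r = β`). -/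
def wedgeC {n : ℕ} (q : ℝ) (c : ℂ) (p r : ℕ × ℕ) : MatT n :=
  qpow q (-c) • tens (E n p.2 p.1) (E n r.1 r.2) - qpow q c • tens (E n r.1 r.2) (E n p.2 p.1)

/-- `R̄_GGS = R_s + (q−q⁻¹) Σ_{α≺β} sign(α,β) e_{−α} ∧_{−sign(α,β) ε_{α,β}} e_β`. -/
def RbarGGS (q : ℝ) (T : BDTriple n) : MatT n :=
  RsQ n q + ((q : ℂ) - (q : ℂ)⁻¹) •
    sumRoots n fun p r =>
      if prec T p r then
        sgn T p r • wedgeC q (-(sgn T p r) * coeffBA (epsMat T) p r) p r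
      else 0

/-- `R̄_J = J⁻¹ R_s J₂₁`. -/
def RbarJ (q : ℝ) (T : BDTriple n) : MatT n :=
  (Jmat q T)⁻¹ * RsQ n q * swap21 (Jmat q T)

/-- `q^{r⁰}` for a diagonal⊗diagonal `r⁰`. -/
def qr0 (n : ℕ) (q : ℝ) (r0 : ℕ → ℕ → ℂ) : MatT n :=
  ∑ i ∈ range n, ∑ j ∈ range n, qpow q (r0 i j) • tens (E n i i) (E n j j)

/-- `R_GGS = q^{r⁰} R̄_GGS q^{r⁰}`. -/
def RGGS (q : ℝ) (T : BDTriple n) (r0 : ℕ → ℕ → ℂ) : MatT n :=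
  qr0 n q r0 * RbarGGS q T * qr0 n q r0

/-- `R_J = q^{r⁰} R̄_J q^{r⁰}`. -/
def RJ (q : ℝ) (T : BDTriple n) (r0 : ℕ → ℕ → ℂ) : MatT n :=
  qr0 n q r0 * RbarJ q T * qr0 n q r0

/-- `r⁰ ∈ 𝔥 ∧ 𝔥`, i.e. the coefficient matrix is antisymmetric. -/
def Antisym (n : ℕ) (r0 : ℕ → ℕ → ℂ) : Prop := ∀ i < n, ∀ j < n, r0 i j = -r0 j i

/-- The Belavin–Drinfeld compatibility equations
`((α − τα) ⊗ 1) r⁰ = ½ ((α + τα) ⊗ 1) P⁰` for all `α ∈ Γ₁`, written componentwise. -/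
def Compat (T : BDTriple n) (r0 : ℕ → ℕ → ℂ) : Prop :=
  ∀ s ∈ T.Γ1, ∀ j < n,
    r0 s j - r0 (s + 1) j - r0 (T.τ s) j + r0 (T.τ s + 1) j
      = (1 / 2 : ℂ) *
        ((if j = s then 1 else 0) - (if j = s + 1 then 1 else 0)
          + (if j = T.τ s then 1 else 0) - (if j = T.τ s + 1 then 1 else 0))

/-- `a₊ⁱ` : the part of `a₊` supported on pairs with `β = τⁱα`. -/
def aPlusLev (T : BDTriple n) (i : ℕ) : MatT n :=
  sumRoots n fun p r =>
    if precK T i p r then (-(sgn T p r)) • tens (E n r.1 r.2) (E n p.2 p.1) else 0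

/-- `a₊ = Σ_{α≺β} (−sign(α,β)) e_β ⊗ e_{−α}`. -/
def aPlus (T : BDTriple n) : MatT n :=
  sumRoots n fun p r =>
    if prec T p r then (-(sgn T p r)) • tens (E n r.1 r.2) (E n p.2 p.1) else 0

/-- `a₋ = Σ_{α≺β} sign(α,β) e_{−α} ⊗ e_β`. -/
def aMinus (T : BDTriple n) : MatT n :=
  sumRoots n fun p r =>
    if prec T p r then sgn T p r • tens (E n p.2 p.1) (E n r.1 r.2) else 0

/-- `P₊ = Σ_{i<j} E_{ij}⊗E_{ji} + ½P⁰`. -/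
def PPlus (n : ℕ) : MatT n :=
  (∑ i ∈ range n, ∑ j ∈ range n, if i < j then tens (E n i j) (E n j i) else 0)
    + (1 / 2 : ℂ) • P0 n

/-- `P₋ = Σ_{i>j} E_{ij}⊗E_{ji} + ½P⁰`. -/
def PMinus (n : ℕ) : MatT n :=
  (∑ i ∈ range n, ∑ j ∈ range n, if j < i then tens (E n i j) (E n j i) else 0)
    + (1 / 2 : ℂ) • P0 n

/-- The matrix `Σ_{i≥j} a₊ⁱa₊ʲ − Σ_{i<j} a₊ⁱa₊ʲ + a₊P₋ + a₋P₊ + P₊a₊ + a₊a₋ − a₋a₊`. -/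
def Mmat (T : BDTriple n) : MatT n :=
  (∑ i ∈ range n, ∑ j ∈ range n, if j ≤ i then aPlusLev T (i + 1) * aPlusLev T (j + 1) else 0)
    - (∑ i ∈ range n, ∑ j ∈ range n, if i < j then aPlusLev T (i + 1) * aPlusLev T (j + 1) else 0)
    + aPlus T * PMinus n + aMinus T * PPlus n + PPlus n * aPlus T
    + aPlus T * aMinus T - aMinus T * aPlus T

/-- `L_{α,β}` : `½` if `α ⋖ β`, `−½` if `α ⋗ β`, `0` otherwise. -/
def Lc (p r : ℕ × ℕ) : ℂ :=
  if p.2 = r.1 then 1 / 2 else if r.2 = p.1 then -(1 / 2) else 0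

/-- The part of `M` (viewed on the basis `e_{τα} ⊗ e_{−α}`, `α ∈ Γ̃₁`) supported on
pairs with `α ⋗ τα`. -/
def partGtr (T : BDTriple n) (M : MatT n) : MatT n :=
  sumRoots n fun p r =>
    if tauStep T p r ∧ r.2 = p.1 then coeffBA M p r • tens (E n r.1 r.2) (E n p.2 p.1) else 0

/-- The part of `M` (viewed on the basis `e_{−α} ⊗ e_{τα}`, `α ∈ Γ̃₁`) supported on
pairs with `α ⋖ τα`. -/
def partLess21 (T : BDTriple n) (M : MatT n) : MatT n :=
  sumRoots n fun p r =>
    if tauStep T p r ∧ p.2 = r.1 then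
      entry M p.2 r.1 p.1 r.2 • tens (E n p.2 p.1) (E n r.1 r.2)
    else 0

/-!
On a segment of `Γ₁` the map `τ` is injective and sends adjacent simple roots to adjacent ones,
so it acts on the segment's indices as a translation or a reflection. Inductively, the same holds
for `τᵏ` on any segment whose first `k` images stay in `Γ₁`, and `β = τᵏ α` says exactly that `τᵏ`
maps the indices of `α` isometrically onto those of `β`.

Writing `(a, b)` for the root `e_a − e_b`, a product of two terms of `a₊ⁱ` is nonzero only for
pairs with `τⁱ(a, z) = (y, d)` and `τⁱ(z, b) = (c, y)`. Both halves of `(a, b)` then lie in a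
segment on which `τⁱ` is an isometry; as it swaps their images, it reflects `(a, b)` onto `(c, d)`.
Conversely, an orientation-reversing `τⁱ(a, b) = (c, d)` splits in this way at each of its
`b − a − 1` interior points, each time with sign product `(−1)^(b−a) = −sign((a, b), (c, d))`.
Nilpotency of `τ` makes the level `i` of a pair unique and smaller than `n`.
-/

section IcoIsometry

variable {f g : ℕ → ℕ} {a b c d e h : ℕ}

def Translates (f : ℕ → ℕ) (a b c : ℕ) : Prop := ∀ j ∈ Ico a b, f j = c + (j - a)

/-- `f j = d - 1 - (j - a)` on `[a, b)`, written without truncated subtraction. -/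
def Reflects (f : ℕ → ℕ) (a b d : ℕ) : Prop := ∀ j ∈ Ico a b, f j + (j - a) + 1 = d

def IsIcoIsometry (f : ℕ → ℕ) (a b c d : ℕ) : Prop :=
  b - a = d - c ∧ (Translates f a b c ∨ Reflects f a b d)

theorem Translates.isIcoIsometry (hf : Translates f a b c) :
    IsIcoIsometry f a b c (c + (b - a)) :=
  ⟨by omega, Or.inl hf⟩

theorem Reflects.isIcoIsometry (hab : a < b) (hf : Reflects f a b d) :
    IsIcoIsometry f a b (d - (b - a)) d := by
  have := hf (b - 1) (mem_Ico.2 ⟨by omega, by omega⟩)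
  exact ⟨by omega, Or.inr hf⟩

theorem Translates.mono {u v : ℕ} (hf : Translates f a b c) (hu : a ≤ u) (hv : v ≤ b) :
    Translates f u v (c + (u - a)) := fun j hj => by
  have := hf j (by simp only [mem_Ico] at hj ⊢; omega)
  simp only [mem_Ico] at hj
  omega

theorem Reflects.mono {u v : ℕ} (hf : Reflects f a b d) (hu : a ≤ u) (hv : v ≤ b) :
    Reflects f u v (d - (u - a)) := fun j hj => by
  have := hf j (by simp only [mem_Ico] at hj ⊢; omega)
  simp only [mem_Ico] at hj
  omega

namespace IsIcoIsometry

theorem mapsTo (hf : IsIcoIsometry f a b c d) {j : ℕ} (hj : j ∈ Ico a b) : f j ∈ Ico c d := by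
  obtain ⟨hlen, hT | hR⟩ := hf
  · have := hT j hj
    simp only [mem_Ico] at hj ⊢
    omega
  · have := hR j hj
    simp only [mem_Ico] at hj ⊢
    omega

theorem exists_preimage (hf : IsIcoIsometry f a b c d) {j : ℕ} (hj : j ∈ Ico c d) :
    ∃ i ∈ Ico a b, f i = j := by
  simp only [mem_Ico] at hj
  obtain ⟨hlen, hT | hR⟩ := hf
  · refine ⟨a + (j - c), mem_Ico.2 ⟨by omega, by omega⟩, ?_⟩
    have := hT (a + (j - c)) (mem_Ico.2 ⟨by omega, by omega⟩)
    omega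
  · refine ⟨a + (d - 1 - j), mem_Ico.2 ⟨by omega, by omega⟩, ?_⟩
    have := hR (a + (d - 1 - j)) (mem_Ico.2 ⟨by omega, by omega⟩)
    omega

theorem comp (hf : IsIcoIsometry f a b c d) (hg : IsIcoIsometry g c d e h) :
    IsIcoIsometry (g ∘ f) a b e h := by
  have hmaps := fun j (hj : j ∈ Ico a b) => mem_Ico.1 (hf.mapsTo hj)
  refine ⟨hf.1.trans hg.1, ?_⟩
  obtain ⟨-, hf | hf⟩ := hf <;> obtain ⟨hlen, hg | hg⟩ := hg
  -- a translation composed with a reflection is a reflection, two reflections give a translation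
  on_goal 1 => refine Or.inl fun j hj => ?_
  on_goal 2 => refine Or.inr fun j hj => ?_
  on_goal 3 => refine Or.inr fun j hj => ?_
  on_goal 4 => refine Or.inl fun j hj => ?_
  all_goals
    have h1 := hf j hj
    have h2 := hg (f j) (mem_Ico.2 (hmaps j hj))
    have h3 := hmaps j hj
    have h4 := mem_Ico.1 hj
    simp only [Function.comp_apply]
    omega

theorem unique {c' d' : ℕ} (hab : a < b) (hf : IsIcoIsometry f a b c d)
    (hf' : IsIcoIsometry f a b c' d') : c = c' ∧ d = d' := by
  obtain ⟨hl, hf | hf⟩ := hf <;> obtain ⟨hl', hf' | hf'⟩ := hf'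
  all_goals
    have h0 := hf a (mem_Ico.2 ⟨le_rfl, hab⟩)
    have h0' := hf' a (mem_Ico.2 ⟨le_rfl, hab⟩)
    rcases Nat.lt_or_ge (a + 1) b with h2 | h2
    · have h1 := hf (a + 1) (mem_Ico.2 ⟨by omega, h2⟩)
      have h1' := hf' (a + 1) (mem_Ico.2 ⟨by omega, h2⟩)
      omega
    · omega

end IsIcoIsometry

theorem sum_svec_add_range (c L : ℕ) : ∑ i ∈ range L, svec (c + i) = rvec c (c + L) := by
  simpa [svec, rvec, add_assoc] using Finset.sum_range_sub' (fun i => evec (c + i)) L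

theorem sum_svec_of_isIcoIsometry (hab : a < b) (hf : IsIcoIsometry f a b c d) :
    ∑ k ∈ Ico a b, svec (f k) = rvec c d := by
  obtain ⟨hlen, hT | hR⟩ := hf
  · rw [sum_Ico_eq_sum_range, ← show c + (b - a) = d by omega, ← sum_svec_add_range]
    refine sum_congr rfl fun i hi => ?_
    rw [hT (a + i) (mem_Ico.2 ⟨by omega, by have := mem_range.1 hi; omega⟩)]
    simp
  · have hd := hR (b - 1) (mem_Ico.2 ⟨by omega, by omega⟩)
    rw [sum_Ico_eq_sum_range, ← show c + (b - a) = d by omega, ← sum_svec_add_range]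
    conv_rhs => rw [← sum_range_reflect]
    refine sum_congr rfl fun i hi => ?_
    have hi := mem_range.1 hi
    have := hR (a + i) (mem_Ico.2 ⟨by omega, by omega⟩)
    congr 1
    omega

theorem translates_Ico_succ_self : Translates f a (a + 1) (f a) := fun j hj => by
  obtain rfl : j = a := by simp only [mem_Ico] at hj; omega
  simp

theorem reflects_Ico_succ_self : Reflects f a (a + 1) (f a + 1) := fun j hj => by
  obtain rfl : j = a := by simp only [mem_Ico] at hj; omega
  simp

theorem Translates.succ (hf : Translates f a b c) (hb : f b = c + (b - a)) :
    Translates f a (b + 1) c := fun j hj => by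
  rcases Nat.lt_or_ge j b with hjb | hjb
  · exact hf j (by simp only [mem_Ico] at hj ⊢; omega)
  · obtain rfl : j = b := by simp only [mem_Ico] at hj; omega
    exact hb

theorem Reflects.succ (hf : Reflects f a b d) (hb : f b + (b - a) + 1 = d) :
    Reflects f a (b + 1) d := fun j hj => by
  rcases Nat.lt_or_ge j b with hjb | hjb
  · exact hf j (by simp only [mem_Ico] at hj ⊢; omega)
  · obtain rfl : j = b := by simp only [mem_Ico] at hj; omega
    exact hb

theorem translates_or_reflects_of_adjacent (hinj : Set.InjOn f (Ico a b))
    (hadj : ∀ j, a ≤ j → j + 1 < b → f (j + 1) = f j + 1 ∨ f j = f (j + 1) + 1) (hab : a < b) :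
    Translates f a b (f a) ∨ Reflects f a b (f a + 1) := by
  induction b, hab using Nat.le_induction with
  | base => exact Or.inl translates_Ico_succ_self
  | succ b hab ih =>
    obtain ⟨m, rfl⟩ : ∃ m, b = m + 1 := ⟨b - 1, by omega⟩
    have hmem : ∀ j, a ≤ j → j < m + 2 → j ∈ (Ico a (m + 2) : Set ℕ) := fun j h1 h2 => by
      simp only [coe_Ico, Set.mem_Ico]; omega
    have ih := ih (hinj.mono fun x hx => by simp only [coe_Ico, Set.mem_Ico] at hx ⊢; omega)
      (fun j h1 h2 => hadj j h1 (by omega))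
    have hstep := hadj m (by omega) (by omega)
    rcases eq_or_ne m a with rfl | hma
    · rcases hstep with hup | hdn
      · exact Or.inl (translates_Ico_succ_self.succ (by omega))
      · exact Or.inr (reflects_Ico_succ_self.succ (by omega))
    -- past the first step the direction cannot change: `f` would take equal values at `m ± 1`
    have hturn : f (m - 1) ≠ f (m + 1) := fun he => by
      have := hinj (hmem _ (by omega) (by omega)) (hmem _ (by omega) (by omega)) he
      omega
    rcases ih with hT | hR
    · have h1 := hT m (mem_Ico.2 ⟨by omega, by omega⟩)
      have h2 := hT (m - 1) (mem_Ico.2 ⟨by omega, by omega⟩)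
      exact Or.inl (hT.succ (by omega))
    · have h1 := hR m (mem_Ico.2 ⟨by omega, by omega⟩)
      have h2 := hR (m - 1) (mem_Ico.2 ⟨by omega, by omega⟩)
      exact Or.inr (hR.succ (by omega))

end IcoIsometry

theorem rvec_injective {a b c d : ℕ} (hab : a < b) (h : rvec a b = rvec c d) :
    a = c ∧ b = d := by
  have ha := congrFun h a
  have hb := congrFun h b
  simp only [rvec, Pi.sub_apply, evec] at ha hb
  split_ifs at ha hb <;> norm_num at ha <;> norm_num at hb <;> omega

theorem ipn_svec {a : ℕ} (ha : a + 1 < n) (b : ℕ) :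
    ipn n (svec a) (svec b) =
      (if a = b then 2 else 0) - (if a = b + 1 then 1 else 0) - (if b = a + 1 then 1 else 0) := by
  have hsub : ({a, a + 1} : Finset ℕ) ⊆ range n := by
    intro x hx
    simp only [mem_insert, mem_singleton] at hx
    simp only [mem_range]
    omega
  rw [ipn, ← sum_subset hsub fun x _ hx => ?_, sum_pair (by omega)]
  · simp only [svec, rvec, Pi.sub_apply, evec]
    split_ifs <;> first | omega | norm_num
  · simp only [mem_insert, mem_singleton, not_or] at hx
    simp [svec, rvec, evec, hx.1, hx.2]

theorem injOn_iterate_of_forall_exists_iterate_notMem {α : Type*} {f : α → α}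
    {S : Set α} (hS : ∀ x ∈ S, ∃ m ≥ 1, f^[m] x ∉ S) {x : α} {k : ℕ}
    (hx : ∀ t ≤ k, f^[t] x ∈ S) : Set.InjOn (fun t => f^[t] x) (Set.Iic k) := by
  -- `f^[s] x = f^[t] x` with `s < t` makes `f^[s] x` periodic, so its orbit never leaves `S`
  have key : ∀ s t, s < t → t ≤ k → f^[s] x ≠ f^[t] x := fun s t hst htk he => by
    have hper : Function.IsPeriodicPt f (t - s) (f^[s] x) := by
      rw [Function.IsPeriodicPt, Function.IsFixedPt, ← Function.iterate_add_apply,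
        Nat.sub_add_cancel hst.le, he]
    obtain ⟨m, -, hm⟩ := hS _ (hx s (by omega))
    rw [← hper.iterate_mod_apply, ← Function.iterate_add_apply] at hm
    exact hm (hx _ (by have := Nat.mod_lt m (show 0 < t - s by omega); omega))
  intro s hs t ht he
  rcases lt_trichotomy s t with h | h | h
  · exact absurd he (key s t h ht)
  · exact h
  · exact absurd he.symm (key t s h hs)

def ofCoeff (n : ℕ) (h : ℕ × ℕ → ℕ × ℕ → ℂ) : MatT n :=
  sumRoots n fun p q => h p q • tens (E n q.1 q.2) (E n p.2 p.1)

theorem ofCoeff_apply (h : ℕ × ℕ → ℕ × ℕ → ℂ) (x₁ x₂ y₁ y₂ : Fin n) :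
    ofCoeff n h (x₁, x₂) (y₁, y₂) = h (y₂, x₂) (x₁, y₁) := by
  simp [ofCoeff, sumRoots, Matrix.sum_apply, tens, E, ite_and, eq_comm]

theorem ofCoeff_mul (h h' : ℕ × ℕ → ℕ × ℕ → ℂ) :
    ofCoeff n h * ofCoeff n h' = ofCoeff n fun p q =>
      ∑ y ∈ range n, ∑ z ∈ range n, h (z, p.2) (q.1, y) * h' (p.1, z) (y, q.2) := by
  ext ⟨x₁, x₂⟩ ⟨y₁, y₂⟩
  simp only [Matrix.mul_apply, Fintype.sum_prod_type, ofCoeff_apply]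
  rw [← Fin.sum_univ_eq_sum_range]
  exact sum_congr rfl fun y _ =>
    Fin.sum_univ_eq_sum_range (fun z => h (z, x₂) (x₁, y) * h' (y₂, z) (y, y₁)) n

theorem sumRoots_ite_smul (P : ℕ × ℕ → ℕ × ℕ → Prop) (h : ℕ × ℕ → ℕ × ℕ → ℂ) :
    (sumRoots n fun p q => if P p q then h p q • tens (E n q.1 q.2) (E n p.2 p.1) else 0) =
      ofCoeff n fun p q => if P p q then h p q else 0 := by
  simp only [ofCoeff, ite_smul, zero_smul]

namespace BDTriple

variable (T : BDTriple n) {a b c d : ℕ}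

theorem tau_adjacent {j : ℕ} (hj : j ∈ T.Γ1) (hj1 : j + 1 ∈ T.Γ1) :
    T.τ (j + 1) = T.τ j + 1 ∨ T.τ j = T.τ (j + 1) + 1 := by
  have key := T.isometry j hj (j + 1) hj1
  rw [ipn_svec (T.mem2 _ (T.bij.mapsTo hj)), ipn_svec (T.mem1 _ hj)] at key
  split_ifs at key <;> norm_num at key <;> omega

theorem exists_isIcoIsometry_tau (h : SpanRoot T a b) :
    ∃ c d, IsIcoIsometry T.τ a b c d := by
  have hmem : ∀ j ∈ (Ico a b : Set ℕ), j ∈ T.Γ1 := fun j hj => by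
    simp only [coe_Ico, Set.mem_Ico] at hj
    exact h.2 j hj.1 hj.2
  rcases translates_or_reflects_of_adjacent (T.bij.injOn.mono hmem)
    (fun j h1 h2 => T.tau_adjacent (h.2 j h1 (by omega)) (h.2 (j + 1) (by omega) h2)) h.1
    with hT | hR
  · exact ⟨_, _, hT.isIcoIsometry⟩
  · exact ⟨_, _, hR.isIcoIsometry h.1⟩

theorem tauStep_iff :
    tauStep T (a, b) (c, d) ↔ SpanRoot T a b ∧ IsIcoIsometry T.τ a b c d := by
  constructor
  · rintro ⟨hspan, hcd, hsum⟩
    obtain ⟨c', d', hf⟩ := T.exists_isIcoIsometry_tau hspan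
    rw [sum_svec_of_isIcoIsometry hspan.1 hf] at hsum
    obtain ⟨rfl, rfl⟩ := rvec_injective hcd hsum
    exact ⟨hspan, hf⟩
  · rintro ⟨hspan, hf⟩
    exact ⟨hspan, by have := hf.1; have := hspan.1; omega,
      (sum_svec_of_isIcoIsometry hspan.1 hf).symm⟩

theorem tauStep_unique {p r r' : ℕ × ℕ} (h : tauStep T p r) (h' : tauStep T p r') :
    r = r' := by
  rw [tauStep_iff] at h h'
  obtain ⟨h1, h2⟩ := h.2.unique h.1.1 h'.2
  exact Prod.ext h1 h2

theorem precK_unique {k : ℕ} {p q q' : ℕ × ℕ} (h : precK T k p q) (h' : precK T k p q') :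
    q = q' := by
  induction k generalizing p with
  | zero => exact (h : p = q).symm.trans h'
  | succ k ih =>
    obtain ⟨r, hr, h⟩ := h
    obtain ⟨r', hr', h'⟩ := h'
    obtain rfl := T.tauStep_unique hr hr'
    exact ih h h'

theorem precK_add {s t : ℕ} {p q : ℕ × ℕ} :
    precK T (s + t) p q ↔ ∃ m, precK T s p m ∧ precK T t m q := by
  induction s generalizing p with
  | zero => simp [precK]
  | succ s ih =>
    rw [show s + 1 + t = s + t + 1 by omega]
    constructor
    · rintro ⟨r, hr, h⟩
      obtain ⟨m, h1, h2⟩ := ih.mp h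
      exact ⟨m, ⟨r, hr, h1⟩, h2⟩
    · rintro ⟨m, ⟨r, hr, h1⟩, h2⟩
      exact ⟨r, hr, ih.mpr ⟨m, h1, h2⟩⟩

theorem exists_tauStep (h : SpanRoot T a b) : ∃ r, tauStep T (a, b) r := by
  obtain ⟨c, d, hf⟩ := T.exists_isIcoIsometry_tau h
  exact ⟨(c, d), (T.tauStep_iff).2 ⟨h, hf⟩⟩

theorem exists_precK_succ {k : ℕ} (hab : a < b)
    (hmem : ∀ j ∈ Ico a b, ∀ t ≤ k, T.τ^[t] j ∈ T.Γ1) : ∃ q, precK T (k + 1) (a, b) q := by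
  obtain ⟨⟨c, d⟩, hstep⟩ :=
    T.exists_tauStep ⟨hab, fun j h1 h2 => hmem j (mem_Ico.2 ⟨h1, h2⟩) 0 (Nat.zero_le _)⟩
  induction k generalizing a b c d with
  | zero => exact ⟨(c, d), (c, d), hstep, rfl⟩
  | succ k ih =>
    have hf := ((T.tauStep_iff).1 hstep).2
    have hmem' : ∀ j ∈ Ico c d, ∀ t ≤ k, T.τ^[t] j ∈ T.Γ1 := fun j hj t ht => by
      obtain ⟨i, hi, rfl⟩ := hf.exists_preimage hj
      simpa only [← Function.iterate_succ_apply] using hmem i hi (t + 1) (by omega)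
    have hcd : c < d := by have := hf.1; omega
    obtain ⟨⟨c', d'⟩, hstep'⟩ :=
      T.exists_tauStep ⟨hcd, fun j h1 h2 => hmem' j (mem_Ico.2 ⟨h1, h2⟩) 0 (Nat.zero_le _)⟩
    obtain ⟨q, hq⟩ := ih hcd hmem' c' d' hstep'
    exact ⟨q, (c, d), hstep, hq⟩

theorem isIcoIsometry_of_precK_succ {k : ℕ} (h : precK T (k + 1) (a, b) (c, d)) :
    a < b ∧ (∀ j ∈ Ico a b, ∀ t ≤ k, T.τ^[t] j ∈ T.Γ1) ∧
      IsIcoIsometry T.τ^[k + 1] a b c d := by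
  induction k generalizing a b with
  | zero =>
    obtain ⟨r, hstep, rfl : r = (c, d)⟩ := h
    obtain ⟨hspan, hf⟩ := (T.tauStep_iff).1 hstep
    refine ⟨hspan.1, fun j hj t ht => ?_, hf⟩
    obtain rfl : t = 0 := by omega
    exact hspan.2 j (mem_Ico.1 hj).1 (mem_Ico.1 hj).2
  | succ k ih =>
    obtain ⟨⟨r, s⟩, hstep, h⟩ := h
    obtain ⟨hspan, hf⟩ := (T.tauStep_iff).1 hstep
    obtain ⟨-, hmem, hg⟩ := ih h
    refine ⟨hspan.1, fun j hj t ht => ?_, ?_⟩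
    · rcases t with _ | t
      · exact hspan.2 j (mem_Ico.1 hj).1 (mem_Ico.1 hj).2
      · rw [Function.iterate_succ_apply]
        exact hmem _ (hf.mapsTo hj) t (by omega)
    · rw [Function.iterate_succ]
      exact hf.comp hg

theorem precK_succ_iff {k : ℕ} : precK T (k + 1) (a, b) (c, d) ↔
    a < b ∧ (∀ j ∈ Ico a b, ∀ t ≤ k, T.τ^[t] j ∈ T.Γ1) ∧
      IsIcoIsometry T.τ^[k + 1] a b c d := by
  refine ⟨T.isIcoIsometry_of_precK_succ, fun ⟨hab, hmem, hf⟩ => ?_⟩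
  obtain ⟨⟨c', d'⟩, h⟩ := T.exists_precK_succ hab hmem
  obtain ⟨rfl, rfl⟩ := hf.unique hab (T.isIcoIsometry_of_precK_succ h).2.2
  exact h

theorem precK_level_lt {k : ℕ} {p q : ℕ × ℕ} (h : precK T (k + 1) p q) : k < n := by
  obtain ⟨a, b⟩ := p
  obtain ⟨c, d⟩ := q
  obtain ⟨hab, hmem, -⟩ := (T.precK_succ_iff).1 h
  have hinj := injOn_iterate_of_forall_exists_iterate_notMem (S := (T.Γ1 : Set ℕ))
    T.nilp (fun t ht => hmem a (mem_Ico.2 ⟨le_rfl, hab⟩) t ht)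
  have hcard : (range (k + 1)).card ≤ T.Γ1.card :=
    card_le_card_of_injOn _
      (fun t ht => hmem a (mem_Ico.2 ⟨le_rfl, hab⟩) t (Nat.lt_succ_iff.1 (mem_range.1 ht)))
      (hinj.mono fun t ht => by simp only [coe_range, Set.mem_Iio, Set.mem_Iic] at ht ⊢; omega)
  have hΓ : T.Γ1.card ≤ (range (n - 1)).card :=
    card_le_card fun i hi => mem_range.2 (by have := T.mem1 i hi; omega)
  simp only [card_range] at hcard hΓ
  omega

theorem precK_mul {m : ℕ} {q : ℕ × ℕ} (h : precK T m q q) (N : ℕ) :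
    precK T (N * m) q q := by
  induction N with
  | zero => simp [precK]
  | succ N ih =>
    rw [Nat.succ_mul]
    exact (T.precK_add).2 ⟨q, ih, h⟩

theorem not_precK_self {m : ℕ} (hm : 1 ≤ m) (q : ℕ × ℕ) : ¬ precK T m q q := fun h => by
  have h' := T.precK_mul h (n + 1)
  have hle : n + 1 ≤ (n + 1) * m := Nat.le_mul_of_pos_right _ hm
  rw [show (n + 1) * m = ((n + 1) * m - 1) + 1 by omega] at h'
  have := T.precK_level_lt h'
  omega

theorem precK_level_unique {i j : ℕ} {p q : ℕ × ℕ} (hi : precK T (i + 1) p q)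
    (hj : precK T (j + 1) p q) : i = j := by
  wlog hij : i < j generalizing i j
  · rcases (Nat.lt_or_ge j i) with h | h
    · exact (this hj hi h).symm
    · omega
  rw [show j + 1 = (i + 1) + (j - i) by omega, T.precK_add] at hj
  obtain ⟨m, hm, hmq⟩ := hj
  obtain rfl := T.precK_unique hi hm
  exact (T.not_precK_self (by omega) _ hmq).elim

theorem revOri_iff : RevOri T (a, b) (c, d) ↔
    ∃ k, precK T (k + 1) (a, b) (c, d) ∧ Reflects T.τ^[k + 1] a b d := by
  constructor
  · rintro ⟨k, h, hτ⟩
    refine ⟨k, h, ?_⟩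
    obtain ⟨hab, -, hlen, hT | hR⟩ := (T.precK_succ_iff).1 h
    · -- a translation with `τᵏ⁺¹ a = d - 1` moves a single point, so it is also a reflection
      have := hT a (mem_Ico.2 ⟨le_rfl, hab⟩)
      simp only at hτ
      obtain rfl : b = a + 1 := by omega
      intro j hj
      obtain rfl : j = a := by simp only [mem_Ico] at hj; omega
      omega
    · exact hR
  · rintro ⟨k, h, hR⟩
    have hab := ((T.precK_succ_iff).1 h).1
    have := hR a (mem_Ico.2 ⟨le_rfl, hab⟩)
    exact ⟨k, h, by simp only; omega⟩

theorem precK_restrict_of_reflects {k u v : ℕ} (h : precK T (k + 1) (a, b) (c, d))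
    (hR : Reflects T.τ^[k + 1] a b d) (hu : a ≤ u) (huv : u < v) (hv : v ≤ b) :
    precK T (k + 1) (u, v) (d - (v - a), d - (u - a)) ∧
      Reflects T.τ^[k + 1] u v (d - (u - a)) := by
  obtain ⟨-, hmem, -⟩ := (T.precK_succ_iff).1 h
  have hf := (hR.mono hu hv).isIcoIsometry huv
  rw [Nat.sub_sub, show u - a + (v - u) = v - a by omega] at hf
  refine ⟨(T.precK_succ_iff).2 ⟨huv, fun j hj => hmem j ?_, hf⟩, hR.mono hu hv⟩
  simp only [mem_Ico] at hj ⊢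
  omega

theorem precK_glue {k y z : ℕ} (h₁ : precK T (k + 1) (z, b) (c, y))
    (h₂ : precK T (k + 1) (a, z) (y, d)) :
    (precK T (k + 1) (a, b) (c, d) ∧ Reflects T.τ^[k + 1] a b d) ∧
      a < z ∧ z < b ∧ y = c + (b - z) := by
  obtain ⟨hzb, hmem₁, hf₁⟩ := (T.precK_succ_iff).1 h₁
  obtain ⟨haz, hmem₂, hf₂⟩ := (T.precK_succ_iff).1 h₂
  have hmem : ∀ j ∈ Ico a b, ∀ t ≤ k, T.τ^[t] j ∈ T.Γ1 := fun j hj => by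
    rcases Nat.lt_or_ge j z with hjz | hjz
    · exact hmem₂ j (by simp only [mem_Ico] at hj ⊢; omega)
    · exact hmem₁ j (by simp only [mem_Ico] at hj ⊢; omega)
  obtain ⟨⟨c', d'⟩, h⟩ := T.exists_precK_succ (by omega) hmem
  obtain ⟨-, -, hlen, hT | hR⟩ := (T.precK_succ_iff).1 h
  · -- a translation would put the image of `[z, b)` above that of `[a, z)`
    have e₁ := hf₁.unique hzb (hT.mono haz.le le_rfl).isIcoIsometry
    have e₂ := hf₂.unique haz (hT.mono le_rfl hzb.le).isIcoIsometry
    have := hf₁.1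
    omega
  · have e₁ := hf₁.unique hzb ((hR.mono haz.le le_rfl).isIcoIsometry hzb)
    have e₂ := hf₂.unique haz ((hR.mono le_rfl hzb.le).isIcoIsometry haz)
    have := hf₁.1
    obtain rfl : d' = d := by omega
    obtain rfl : c' = c := by omega
    exact ⟨⟨h, hR⟩, haz, hzb, by omega⟩

def aPlusCoeff (k : ℕ) (p q : ℕ × ℕ) : ℂ := if precK T k p q then -sgn T p q else 0

theorem aPlusCoeff_of_precK_of_reflects {k : ℕ} (h : precK T (k + 1) (a, b) (c, d))
    (hR : Reflects T.τ^[k + 1] a b d) :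
    T.aPlusCoeff (k + 1) (a, b) (c, d) = -(-1) ^ (b - a - 1) := by
  simp [aPlusCoeff, sgn, h, (T.revOri_iff).2 ⟨k, h, hR⟩]

theorem aPlusCoeff_mul_aPlusCoeff (k y z : ℕ) :
    T.aPlusCoeff (k + 1) (z, b) (c, y) * T.aPlusCoeff (k + 1) (a, z) (y, d) =
      if (precK T (k + 1) (a, b) (c, d) ∧ Reflects T.τ^[k + 1] a b d) ∧
        a < z ∧ z < b ∧ y = c + (b - z) then (-1) ^ (b - a) else 0 := by
  split_ifs with hcond
  · obtain ⟨⟨h, hR⟩, haz, hzb, rfl⟩ := hcond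
    have hlen := ((T.precK_succ_iff).1 h).2.2.1
    obtain ⟨h₁, hR₁⟩ := T.precK_restrict_of_reflects h hR haz.le hzb le_rfl
    obtain ⟨h₂, hR₂⟩ := T.precK_restrict_of_reflects h hR le_rfl haz hzb.le
    rw [show d - (b - a) = c by omega] at h₁
    simp only [Nat.sub_self, Nat.sub_zero] at h₂ hR₂
    rw [show c + (b - z) = d - (z - a) by omega]
    rw [T.aPlusCoeff_of_precK_of_reflects h₁ hR₁, T.aPlusCoeff_of_precK_of_reflects h₂ hR₂,
      show b - a = (b - z - 1) + (z - a - 1) + 2 by omega]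
    ring
  · by_cases h₁ : precK T (k + 1) (z, b) (c, y)
    · by_cases h₂ : precK T (k + 1) (a, z) (y, d)
      · exact absurd (T.precK_glue h₁ h₂) hcond
      · simp [aPlusCoeff, h₂]
    · simp [aPlusCoeff, h₁]

theorem sum_aPlusCoeff_mul_aPlusCoeff (k : ℕ) (hb : b ≤ n) (hd : d ≤ n) :
    ∑ y ∈ range n, ∑ z ∈ range n,
        T.aPlusCoeff (k + 1) (z, b) (c, y) * T.aPlusCoeff (k + 1) (a, z) (y, d) =
      if precK T (k + 1) (a, b) (c, d) ∧ Reflects T.τ^[k + 1] a b d then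
        ((b - a - 1 : ℕ) : ℂ) * (-1) ^ (b - a) else 0 := by
  simp only [aPlusCoeff_mul_aPlusCoeff]
  split_ifs with hc
  · have hlen := ((T.precK_succ_iff).1 hc.1).2.2.1
    simp only [hc, true_and]
    rw [sum_comm]
    calc ∑ z ∈ range n, ∑ y ∈ range n,
          (if a < z ∧ z < b ∧ y = c + (b - z) then (-1 : ℂ) ^ (b - a) else 0)
        = ∑ z ∈ range n, if a < z ∧ z < b then (-1 : ℂ) ^ (b - a) else 0 :=
          sum_congr rfl fun z _ => by
            by_cases hz : a < z ∧ z < b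
            · simp only [hz, true_and, sum_ite_eq', mem_range, if_true]
              rw [if_pos (by omega)]
            · simp only [← and_assoc, hz, false_and, if_false, sum_const_zero]
      _ = ((b - a - 1 : ℕ) : ℂ) * (-1) ^ (b - a) := by
          rw [sum_ite, sum_const_zero, add_zero, sum_const, nsmul_eq_mul,
            show (range n).filter (fun z => a < z ∧ z < b) = Ioo a b by
              ext z; simp only [mem_filter, mem_range, mem_Ioo]; omega, Nat.card_Ioo]
  · exact sum_eq_zero fun y _ => sum_eq_zero fun z _ => if_neg fun h => hc h.1

theorem sum_range_ite_precK_and_reflects (x : ℂ) :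
    (∑ i ∈ range n,
        if precK T (i + 1) (a, b) (c, d) ∧ Reflects T.τ^[i + 1] a b d then x else 0) =
      if RevOri T (a, b) (c, d) then x else 0 := by
  split_ifs with hrev
  · obtain ⟨k, hk, hR⟩ := (T.revOri_iff).1 hrev
    rw [sum_eq_single_of_mem k (mem_range.2 (T.precK_level_lt hk)) fun i _ hik => ?_,
      if_pos ⟨hk, hR⟩]
    exact if_neg fun hi => hik (T.precK_level_unique hi.1 hk)
  · exact sum_eq_zero fun i _ => if_neg fun hi => hrev ((T.revOri_iff).2 ⟨i, hi⟩)

end BDTriple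

theorem stmt_3_general {n : ℕ} (T : BDTriple n) :
    (∑ i ∈ range n, aPlusLev T (i + 1) * aPlusLev T (i + 1))
      = - sumRoots n fun p q =>
          if RevOri T p q then
            (sgn T p q * (((p.2 - p.1 : ℕ) : ℂ) - 1)) • tens (E n q.1 q.2) (E n p.2 p.1)
          else 0 := by
  have hlev : ∀ k, aPlusLev T k = ofCoeff n (T.aPlusCoeff k) := fun k => sumRoots_ite_smul _ _
  simp only [hlev, ofCoeff_mul, sumRoots_ite_smul]
  ext ⟨x₁, x₂⟩ ⟨y₁, y₂⟩
  simp only [Matrix.sum_apply, Matrix.neg_apply, ofCoeff_apply,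
    T.sum_aPlusCoeff_mul_aPlusCoeff _ x₂.isLt.le y₁.isLt.le, T.sum_range_ite_precK_and_reflects]
  split_ifs with hrev
  · obtain ⟨k, hk, -⟩ := (T.revOri_iff).1 hrev
    obtain ⟨L, hL⟩ : ∃ L, (x₂ : ℕ) - y₂ = L + 1 := ⟨_, (Nat.succ_pred_eq_of_pos
      (Nat.sub_pos_of_lt ((T.precK_succ_iff).1 hk).1)).symm⟩
    simp only [sgn, if_pos hrev, hL, Nat.add_sub_cancel, pow_succ]
    push_cast
    ring
  · simp

/-- `Σ_i (a₊ⁱ)² = −Σ_{α ≺← β} sign(α,β)(|α|−1) e_β ⊗ e_{−α}`. -/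
theorem stmt_3 {n : ℕ} (hn : 2 ≤ n) (T : BDTriple n) :
    (∑ i ∈ range n, aPlusLev T (i + 1) * aPlusLev T (i + 1))
      = - sumRoots n fun p q =>
          if RevOri T p q then
            (sgn T p q * (((p.2 - p.1 : ℕ) : ℂ) - 1)) • tens (E n q.1 q.2) (E n p.2 p.1)
          else 0 :=
  stmt_3_general T

end
end GGS
end
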